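/- arXiv:1603.06630 — 3 statements merged into one kernel-verified Lean document; each statement's English description precedes it below -/
import Mathlib

section
/- Let a, b, c, d be integers with a ≠ 0 and c ≠ 0, and let f(x) = a*x + b and g(x) = c*x + d. Then liminf_{N → ∞} (1/(2N+1)) * |{x ∈ ℤ : -N ≤ x ≤ N and gcd(f(x), g(x)) = 1}| > 0 if and only if gcd(a, b, c, d) = 1 and a*d ≠ b*c. -/
/-! The gcd of `a x + b` and `c x + d` divides `D = a d - b c` and depends only on `x mod D`.
If `D ≠ 0` and `gcd(a, b, c, d) = 1`, no prime `p ∣ D` divides both values at `x = 0` and at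
`x = 1`, so by the Chinese remainder theorem some residue class mod `D` consists of points with
coprime values, and it has density `1 / |D|`. Conversely, a common divisor of `a, b, c, d` divides
both values, and if `D = 0` then coprimality of the values forces `a x + b ∣ a`, which bounds `|x|`;
in both cases there are only finitely many good `x`. -/

open Filter Finset

section LinearPair

variable (a b c d : ℤ)

theorem gcd_eval_dvd_sub_mul (x : ℤ) :
    (Int.gcd (a * x + b) (c * x + d) : ℤ) ∣ a * d - b * c := by
  have key : a * d - b * c = a * (c * x + d) - c * (a * x + b) := by ring
  rw [key]
  exact dvd_sub ((Int.gcd_dvd_right _ _).mul_left a) ((Int.gcd_dvd_left _ _).mul_left c)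

theorem dvd_mul_add_iff_of_modEq {n x y : ℤ} (h : x ≡ y [ZMOD n]) :
    n ∣ a * x + b ↔ n ∣ a * y + b :=
  ((h.mul_left a).add_right b).dvd_iff

theorem gcd_eval_eq_of_modEq {x y : ℤ} (h : x ≡ y [ZMOD a * d - b * c]) :
    Int.gcd (a * x + b) (c * x + d) = Int.gcd (a * y + b) (c * y + d) := by
  suffices key : ∀ x y, x ≡ y [ZMOD a * d - b * c] →
      Int.gcd (a * x + b) (c * x + d) ∣ Int.gcd (a * y + b) (c * y + d) from
    Nat.dvd_antisymm (key x y h) (key y x h.symm)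
  intro x y h
  have hk := h.of_dvd (gcd_eval_dvd_sub_mul a b c d x)
  exact Int.natCast_dvd_natCast.1 <| Int.dvd_coe_gcd
    ((dvd_mul_add_iff_of_modEq a b hk).1 (Int.gcd_dvd_left _ _))
    ((dvd_mul_add_iff_of_modEq c d hk).1 (Int.gcd_dvd_right _ _))

theorem gcd_dvd_gcd_eval (x : ℤ) :
    Int.gcd a (Int.gcd b (Int.gcd c d)) ∣ Int.gcd (a * x + b) (c * x + d) := by
  have hbcd : (Int.gcd a (Int.gcd b (Int.gcd c d)) : ℤ) ∣ Int.gcd b (Int.gcd c d) :=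
    Int.gcd_dvd_right _ _
  have hcd := hbcd.trans (Int.gcd_dvd_right _ _)
  exact Int.natCast_dvd_natCast.1 <| Int.dvd_coe_gcd
    (dvd_add ((Int.gcd_dvd_left _ _).mul_right x) (hbcd.trans (Int.gcd_dvd_left _ _)))
    (dvd_add ((hcd.trans (Int.gcd_dvd_left _ _)).mul_right x) (hcd.trans (Int.gcd_dvd_right _ _)))

theorem exists_not_dvd_both_eval (h : Int.gcd a (Int.gcd b (Int.gcd c d)) = 1)
    {p : ℕ} (hp : p ≠ 1) : ∃ r : ℕ, ¬((p : ℤ) ∣ a * r + b ∧ (p : ℤ) ∣ c * r + d) := by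
  by_contra! hbad
  obtain ⟨hb, hd⟩ := hbad 0
  obtain ⟨hab, hcd⟩ := hbad 1
  simp only [Nat.cast_zero, mul_zero, zero_add, Nat.cast_one, mul_one] at hb hd hab hcd
  have hpa : (p : ℤ) ∣ a := by simpa using dvd_sub hab hb
  have hpc : (p : ℤ) ∣ c := by simpa using dvd_sub hcd hd
  have := Int.dvd_coe_gcd hpa (Int.dvd_coe_gcd hb (Int.dvd_coe_gcd hpc hd))
  rw [h] at this
  exact hp (by exact_mod_cast Int.eq_one_of_dvd_one (by positivity) this)

theorem exists_forall_primeFactors_not_dvd (h : Int.gcd a (Int.gcd b (Int.gcd c d)) = 1)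
    (n : ℕ) : ∃ x : ℤ, ∀ p ∈ n.primeFactors, ¬((p : ℤ) ∣ a * x + b ∧ (p : ℤ) ∣ c * x + d) := by
  have hres : ∀ p : ℕ, ∃ r : ℕ, p ≠ 1 → ¬((p : ℤ) ∣ a * r + b ∧ (p : ℤ) ∣ c * r + d) := fun p =>
    if hp : p = 1 then ⟨0, absurd hp⟩
    else (exists_not_dvd_both_eval a b c d h hp).imp fun _ hr _ => hr
  choose r hr using hres
  obtain ⟨k, hk⟩ := Nat.chineseRemainderOfFinset r id n.primeFactors
    (fun p hp => (Nat.prime_of_mem_primeFactors hp).ne_zero)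
    (fun p hp q hq hpq => (Nat.coprime_primes (Nat.prime_of_mem_primeFactors hp)
      (Nat.prime_of_mem_primeFactors hq)).2 hpq)
  refine ⟨k, fun p hp => ?_⟩
  have hkp : (k : ℤ) ≡ r p [ZMOD p] := Int.natCast_modEq_iff.2 (hk p hp)
  rw [dvd_mul_add_iff_of_modEq a b hkp, dvd_mul_add_iff_of_modEq c d hkp]
  exact hr p (Nat.prime_of_mem_primeFactors hp).ne_one

theorem exists_gcd_eval_eq_one (h : Int.gcd a (Int.gcd b (Int.gcd c d)) = 1)
    (hD : a * d ≠ b * c) : ∃ x : ℤ, Int.gcd (a * x + b) (c * x + d) = 1 := by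
  obtain ⟨x, hx⟩ := exists_forall_primeFactors_not_dvd a b c d h (a * d - b * c).natAbs
  refine ⟨x, Nat.eq_one_iff_not_exists_prime_dvd.2 fun p hp hpg => hx p ?_ ⟨?_, ?_⟩⟩
  · exact Nat.mem_primeFactors.2 ⟨hp,
      hpg.trans (Int.natCast_dvd.1 (gcd_eval_dvd_sub_mul a b c d x)),
      Int.natAbs_ne_zero.2 (sub_ne_zero.2 hD)⟩
  · exact (Int.natCast_dvd_natCast.2 hpg).trans (Int.gcd_dvd_left _ _)
  · exact (Int.natCast_dvd_natCast.2 hpg).trans (Int.gcd_dvd_right _ _)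

theorem finite_setOf_gcd_eval_eq_one {a b c d : ℤ} (ha : a ≠ 0) (h : a * d = b * c) :
    {x | Int.gcd (a * x + b) (c * x + d) = 1}.Finite := by
  refine (Set.finite_Icc (-(|a| + |b|)) (|a| + |b|)).subset fun x hx => ?_
  have hcop : IsCoprime (a * x + b) (c * x + d) := Int.isCoprime_iff_gcd_eq_one.2 hx
  have hdvd : a * x + b ∣ a := hcop.dvd_of_dvd_mul_right ⟨c, by linear_combination h⟩
  have hle : |a * x + b| ≤ |a| := by
    simpa only [Int.abs_eq_natAbs, Nat.cast_le] using Int.natAbs_le_of_dvd_ne_zero hdvd ha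
  have hx : |x| ≤ |a * x| := by
    rw [abs_mul]; exact le_mul_of_one_le_left (abs_nonneg x) (Int.one_le_abs ha)
  rw [Set.mem_Icc, ← abs_le]
  calc |x| ≤ |a * x + b - b| := by simpa using hx
    _ ≤ |a * x + b| + |b| := abs_sub _ _
    _ ≤ |a| + |b| := by gcongr

end LinearPair

section Density

variable (P : ℤ → Prop) [DecidablePred P]

theorem card_filter_modEq_Icc_ge {r : ℤ} (hr : 0 < r) (v : ℤ) (N : ℕ) :
    (2 * N + 1 : ℝ) / r - 1 ≤ #{x ∈ Icc (-(N : ℤ)) N | x ≡ v [ZMOD r]} := by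
  have hcard := Int.Ico_filter_modEq_card (-(N : ℤ)) (N + 1) hr v
  rw [Finset.Ico_add_one_right_eq_Icc] at hcard
  have hceil : (⌈((N + 1 : ℤ) - v) / (r : ℚ)⌉ - ⌈((-N : ℤ) - v) / (r : ℚ)⌉ : ℚ)
      ≤ #{x ∈ Icc (-(N : ℤ)) N | x ≡ v [ZMOD r]} := by
    exact_mod_cast hcard ▸ le_max_left _ _
  have hr' : (0 : ℚ) < r := by exact_mod_cast hr
  have hq : (2 * N + 1 : ℚ) / r - 1 ≤ #{x ∈ Icc (-(N : ℤ)) N | x ≡ v [ZMOD r]} := by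
    have hlen : ((N + 1 : ℤ) - v) / (r : ℚ) - ((-N : ℤ) - v) / (r : ℚ) = (2 * N + 1) / r := by
      push_cast; ring
    linarith [Int.le_ceil (((N + 1 : ℤ) - v) / (r : ℚ)),
      Int.ceil_lt_add_one (((-N : ℤ) - v) / (r : ℚ))]
  exact_mod_cast (Rat.cast_le (K := ℝ)).2 hq

theorem liminf_pos_of_forall_modEq {r : ℤ} (hr : 0 < r) (v : ℤ)
    (hP : ∀ x, x ≡ v [ZMOD r] → P x) :
    0 < liminf (fun N : ℕ => (#{x ∈ Icc (-(N : ℤ)) N | P x} : ℝ) / (2 * N + 1)) atTop := by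
  have hr' : (0 : ℝ) < r := by exact_mod_cast hr
  have hlow : ∀ᶠ N : ℕ in atTop,
      1 / (2 * r : ℝ) ≤ #{x ∈ Icc (-(N : ℤ)) N | P x} / (2 * N + 1) := by
    filter_upwards [eventually_ge_atTop r.toNat] with N hN
    have hNr : (r : ℝ) ≤ N := by exact_mod_cast (Int.self_le_toNat r).trans (by exact_mod_cast hN)
    have hmono :
        (#{x ∈ Icc (-(N : ℤ)) N | x ≡ v [ZMOD r]} : ℝ) ≤ #{x ∈ Icc (-(N : ℤ)) N | P x} := by
      exact_mod_cast card_le_card (monotone_filter_right _ fun x _ => hP x)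
    have hcount := card_filter_modEq_Icc_ge hr v N
    rw [div_sub_one hr'.ne', div_le_iff₀ hr'] at hcount
    rw [div_le_div_iff₀ (by positivity) (by positivity)]
    nlinarith
  have hbdd : IsCoboundedUnder (· ≥ ·) atTop
      (fun N : ℕ => (#{x ∈ Icc (-(N : ℤ)) N | P x} : ℝ) / (2 * N + 1)) := by
    refine isBoundedUnder_of ⟨1, fun N => ?_⟩ |>.isCoboundedUnder_ge
    rw [div_le_one (by positivity)]
    have := card_filter_le (Icc (-(N : ℤ)) N) P
    rw [Int.card_Icc] at this
    exact_mod_cast this.trans (by omega)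
  exact (by positivity : (0 : ℝ) < 1 / (2 * r)).trans_le (le_liminf_of_le hbdd hlow)

theorem tendsto_card_filter_Icc_div_of_finite (hP : {x | P x}.Finite) :
    Tendsto (fun N : ℕ => (#{x ∈ Icc (-(N : ℤ)) N | P x} : ℝ) / (2 * N + 1)) atTop (nhds 0) := by
  have h2N : Tendsto (fun N : ℕ => (2 * N + 1 : ℝ)) atTop atTop :=
    tendsto_atTop_add_const_right _ _ (tendsto_natCast_atTop_atTop.const_mul_atTop two_pos)
  refine tendsto_of_tendsto_of_tendsto_of_le_of_le tendsto_const_nhds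
    (tendsto_const_nhds (x := (#hP.toFinset : ℝ)) |>.div_atTop h2N)
    (fun N => by positivity) fun N => ?_
  dsimp only
  gcongr
  exact fun x hx => hP.mem_toFinset.2 (mem_filter.1 hx).2

end Density

theorem stmt_0_general (a b c d : ℤ) (ha : a ≠ 0) :
    (0 < Filter.liminf (fun N : ℕ =>
        (((Finset.Icc (-(N : ℤ)) (N : ℤ)).filter
          (fun x => Int.gcd (a * x + b) (c * x + d) = 1)).card : ℝ) / (2 * N + 1))
      Filter.atTop)
      ↔ (Int.gcd a (Int.gcd b (Int.gcd c d)) = 1 ∧ a * d ≠ b * c) := by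
  constructor
  · intro hpos
    by_contra hbad
    have hfin : {x | Int.gcd (a * x + b) (c * x + d) = 1}.Finite := by
      rcases not_and_or.1 hbad with hg | hD
      · exact Set.finite_empty.subset fun x (hx : Int.gcd (a * x + b) (c * x + d) = 1) =>
          hg (Nat.dvd_one.1 (hx ▸ gcd_dvd_gcd_eval a b c d x))
      · exact finite_setOf_gcd_eval_eq_one ha (not_not.1 hD)
    rw [(tendsto_card_filter_Icc_div_of_finite _ hfin).liminf_eq] at hpos
    exact hpos.false
  · rintro ⟨hg, hD⟩
    obtain ⟨x₀, hx₀⟩ := exists_gcd_eval_eq_one a b c d hg hD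
    exact liminf_pos_of_forall_modEq _ (abs_pos.2 (sub_ne_zero.2 hD)) x₀
      fun x hx => (gcd_eval_eq_of_modEq a b c d (Int.modEq_abs.1 hx)).trans hx₀

/-- Evaluationally coprime linear polynomials: the lower asymptotic density of
integers `x ∈ [-N, N]` with `gcd(a*x+b, c*x+d) = 1` is positive iff
`gcd(a,b,c,d) = 1` and `a*d ≠ b*c`. -/
theorem stmt_0 (a b c d : ℤ) (ha : a ≠ 0) (hc : c ≠ 0) :
    (0 < Filter.liminf (fun N : ℕ =>
        (((Finset.Icc (-(N : ℤ)) (N : ℤ)).filter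
          (fun x => Int.gcd (a * x + b) (c * x + d) = 1)).card : ℝ) / (2 * N + 1))
      Filter.atTop)
      ↔ (Int.gcd a (Int.gcd b (Int.gcd c d)) = 1 ∧ a * d ≠ b * c) :=
  stmt_0_general a b c d ha
end

section
/- Let a, b, c, d be integers with a ≠ 0 and c ≠ 0, and set f(x) = a*x + b and g(x) = c*x + d. If gcd(a, b, c, d) = 1 and a*d ≠ b*c, then liminf_{N → ∞} (1/(2N+1)) * |{x ∈ ℤ : -N ≤ x ≤ N and gcd(f(x), g(x)) = 1}| > 0. -/
/-!
Every common divisor of `a x + b` and `c x + d` divides `a d - b c = a (c x + d) - c (a x + b)`.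
Since `gcd (a, b, c, d) = 1`, for each prime `p` some residue `u` mod `p` has `p` not dividing
both forms, so by the Chinese remainder theorem some `x₀` makes
`gcd (a x₀ + b, c x₀ + d, a d - b c) = 1`. Then every `x ≡ x₀ (mod a d - b c)` is good, and an
arithmetic progression has positive lower density in `[-N, N]`.
-/

open Filter Finset

section GcdOfLinearForms

variable {a b c d : ℤ}

theorem exists_zmod_not_both_eq_zero (hgcd : Int.gcd a (Int.gcd b (Int.gcd c d)) = 1)
    {p : ℕ} (hp : p ≠ 1) :
    ∃ u : ZMod p, ¬((a : ZMod p) * u + b = 0 ∧ (c : ZMod p) * u + d = 0) := by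
  by_contra! h
  obtain ⟨hb, hd⟩ := h 0
  obtain ⟨hab, hcd⟩ := h 1
  simp only [mul_zero, zero_add, mul_one] at hb hd hab hcd
  rw [hb, add_zero] at hab
  rw [hd, add_zero] at hcd
  rw [ZMod.intCast_zmod_eq_zero_iff_dvd] at hab hb hcd hd
  have hp1 : (p : ℤ) ∣ (1 : ℕ) :=
    hgcd ▸ Int.dvd_coe_gcd hab (Int.dvd_coe_gcd hb (Int.dvd_coe_gcd hcd hd))
  exact hp (Nat.dvd_one.mp (Int.natCast_dvd_natCast.mp hp1))

theorem exists_gcd_gcd_eq_one (hgcd : Int.gcd a (Int.gcd b (Int.gcd c d)) = 1)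
    {n : ℤ} (hn : n ≠ 0) :
    ∃ x : ℤ, Int.gcd (Int.gcd (a * x + b) (c * x + d)) n = 1 := by
  have hu : ∀ p ∈ n.natAbs.primeFactors,
      ∃ u : ZMod p, ¬((a : ZMod p) * u + b = 0 ∧ (c : ZMod p) * u + d = 0) :=
    fun p hp => exists_zmod_not_both_eq_zero hgcd (Nat.prime_of_mem_primeFactors hp).ne_one
  choose! u hu using hu
  obtain ⟨k, hk⟩ := Nat.chineseRemainderOfFinset (fun p => (u p).val) id n.natAbs.primeFactors
    (fun p hp => (Nat.prime_of_mem_primeFactors hp).ne_zero)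
    (fun p hp q hq hpq => (Nat.coprime_primes (Nat.prime_of_mem_primeFactors hp)
      (Nat.prime_of_mem_primeFactors hq)).mpr hpq)
  refine ⟨k, Nat.eq_one_iff_not_exists_prime_dvd.mpr fun p hp hdvd => ?_⟩
  have hpn : p ∈ n.natAbs.primeFactors :=
    Nat.mem_primeFactors.mpr
      ⟨hp, hdvd.trans (Int.gcd_dvd_natAbs_right _ _), Int.natAbs_ne_zero.mpr hn⟩
  have hkp : (k : ZMod p) = u p := by
    have : NeZero p := ⟨hp.ne_zero⟩
    rw [← ZMod.natCast_zmod_val (u p), ZMod.natCast_eq_natCast_iff]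
    exact hk p hpn
  have hfg := (Int.natCast_dvd_natCast.mpr hdvd).trans (Int.gcd_dvd_left _ _)
  have hf : ((a * k + b : ℤ) : ZMod p) = 0 :=
    (ZMod.intCast_zmod_eq_zero_iff_dvd _ p).mpr (hfg.trans (Int.gcd_dvd_left _ _))
  have hg : ((c * k + d : ℤ) : ZMod p) = 0 :=
    (ZMod.intCast_zmod_eq_zero_iff_dvd _ p).mpr (hfg.trans (Int.gcd_dvd_right _ _))
  push_cast [hkp] at hf hg
  exact hu p hpn ⟨hf, hg⟩

theorem gcd_eq_one_of_dvd_sub {x x₀ : ℤ}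
    (hx₀ : Int.gcd (Int.gcd (a * x₀ + b) (c * x₀ + d)) (a * d - b * c) = 1)
    (hx : a * d - b * c ∣ x - x₀) :
    Int.gcd (a * x + b) (c * x + d) = 1 := by
  set e : ℤ := (Int.gcd (a * x + b) (c * x + d) : ℤ)
  have hf : e ∣ a * x + b := Int.gcd_dvd_left _ _
  have hg : e ∣ c * x + d := Int.gcd_dvd_right _ _
  have hdet : e ∣ a * d - b * c := by
    rw [show a * d - b * c = a * (c * x + d) - c * (a * x + b) by ring]
    exact (hg.mul_left a).sub (hf.mul_left c)
  have hsub : e ∣ x - x₀ := hdet.trans hx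
  have hf₀ : e ∣ a * x₀ + b := by
    rw [show a * x₀ + b = (a * x + b) - a * (x - x₀) by ring]
    exact hf.sub (hsub.mul_left a)
  have hg₀ : e ∣ c * x₀ + d := by
    rw [show c * x₀ + d = (c * x + d) - c * (x - x₀) by ring]
    exact hg.sub (hsub.mul_left c)
  have h1 : e ∣ (1 : ℕ) := hx₀ ▸ Int.dvd_coe_gcd (Int.dvd_coe_gcd hf₀ hg₀) hdet
  exact Nat.dvd_one.mp (Int.natCast_dvd_natCast.mp h1)

end GcdOfLinearForms

section ArithmeticProgression

variable {P : ℤ → Prop} [DecidablePred P] {x₀ : ℤ} {T : ℕ}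

theorem sub_abs_lt_mul_card_filter_Icc (hT : 0 < T) (hP : ∀ x, (T : ℤ) ∣ x - x₀ → P x)
    (N : ℕ) : (N : ℤ) - |x₀| < T * #{x ∈ Icc (-N : ℤ) N | P x} := by
  set K := ((N : ℤ) - |x₀|) / T
  have hT' : (0 : ℤ) < T := by exact_mod_cast hT
  have hKT : K * T ≤ N - |x₀| := Int.ediv_mul_le _ hT'.ne'
  have hmaps : Set.MapsTo (fun k : ℤ => x₀ + k * T) (Icc 0 K)
      (({x ∈ Icc (-N : ℤ) N | P x} : Finset ℤ) : Set ℤ) := by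
    intro k hk
    rw [coe_Icc, Set.mem_Icc] at hk
    have hkT : k * T ≤ K * T := mul_le_mul_of_nonneg_right hk.2 hT'.le
    have hkT₀ : 0 ≤ k * T := mul_nonneg hk.1 hT'.le
    have := neg_abs_le x₀
    have := le_abs_self x₀
    simp only [coe_filter, mem_Icc, Set.mem_ofPred_eq]
    exact ⟨⟨by linarith, by linarith⟩, hP _ (by simp)⟩
  have hinj : Set.InjOn (fun k : ℤ => x₀ + k * T) (Icc 0 K) :=
    fun k _ l _ h => mul_right_cancel₀ hT'.ne' (add_left_cancel h)
  have hcard : K + 1 ≤ #{x ∈ Icc (-N : ℤ) N | P x} :=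
    calc K + 1 ≤ (K + 1).toNat := Int.self_le_toNat _
      _ = #(Icc 0 K) := by rw [Int.card_Icc, sub_zero]
      _ ≤ _ := by exact_mod_cast card_le_card_of_injOn _ hmaps hinj
  calc (N : ℤ) - |x₀| < (K + 1) * T := Int.lt_ediv_add_one_mul_self _ hT'
    _ ≤ _ := by rw [mul_comm]; exact mul_le_mul_of_nonneg_left hcard hT'.le

theorem liminf_card_filter_Icc_div_pos (hT : 0 < T) (hP : ∀ x, (T : ℤ) ∣ x - x₀ → P x) :
    0 < liminf (fun N : ℕ => (#{x ∈ Icc (-N : ℤ) N | P x} : ℝ) / (2 * N + 1)) atTop := by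
  have hle_one (N : ℕ) : (#{x ∈ Icc (-N : ℤ) N | P x} : ℝ) / (2 * N + 1) ≤ 1 := by
    rw [div_le_one (by positivity)]
    have h := card_filter_le (Icc (-N : ℤ) N) P
    rw [Int.card_Icc, show ((N : ℤ) + 1 - -N).toNat = 2 * N + 1 by omega] at h
    exact_mod_cast h
  have hev : ∀ᶠ N : ℕ in atTop,
      1 / (4 * T : ℝ) ≤ (#{x ∈ Icc (-N : ℤ) N | P x} : ℝ) / (2 * N + 1) := by
    filter_upwards [eventually_ge_atTop (2 * x₀.natAbs)] with N hN
    have hlt := sub_abs_lt_mul_card_filter_Icc hT hP N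
    have hN' : 2 * |x₀| ≤ N := by rw [Int.abs_eq_natAbs]; exact_mod_cast hN
    have h : (2 * N + 1 : ℤ) ≤ #{x ∈ Icc (-N : ℤ) N | P x} * (4 * T) := by linarith
    rw [div_le_div_iff₀ (by positivity) (by positivity), one_mul]
    exact_mod_cast h
  exact (by positivity : (0 : ℝ) < 1 / (4 * T)).trans_le
    (le_liminf_of_le (isCoboundedUnder_ge_of_le atTop hle_one) hev)

end ArithmeticProgression

theorem stmt_1_general (a b c d : ℤ)
    (hgcd : Int.gcd a (Int.gcd b (Int.gcd c d)) = 1) (hdet : a * d ≠ b * c) :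
    0 < Filter.liminf (fun N : ℕ =>
        (((Finset.Icc (-(N : ℤ)) (N : ℤ)).filter
          (fun x => Int.gcd (a * x + b) (c * x + d) = 1)).card : ℝ) / (2 * N + 1))
      Filter.atTop := by
  have hD : a * d - b * c ≠ 0 := sub_ne_zero.mpr hdet
  obtain ⟨x₀, hx₀⟩ := exists_gcd_gcd_eq_one hgcd hD
  exact liminf_card_filter_Icc_div_pos (Int.natAbs_pos.mpr hD)
    fun x hx => gcd_eq_one_of_dvd_sub hx₀ (Int.natAbs_dvd.mp hx)

/-- Sufficiency: if `gcd(a,b,c,d) = 1` and `a*d ≠ b*c`, the lower asymptotic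
density of `x` with `gcd(a*x+b, c*x+d) = 1` over `[-N, N]` is positive. -/
theorem stmt_1 (a b c d : ℤ) (ha : a ≠ 0) (hc : c ≠ 0)
    (hgcd : Int.gcd a (Int.gcd b (Int.gcd c d)) = 1) (hdet : a * d ≠ b * c) :
    0 < Filter.liminf (fun N : ℕ =>
        (((Finset.Icc (-(N : ℤ)) (N : ℤ)).filter
          (fun x => Int.gcd (a * x + b) (c * x + d) = 1)).card : ℝ) / (2 * N + 1))
      Filter.atTop :=
  stmt_1_general a b c d hgcd hdet
end

section
/- Let a, b, c, d be integers with a ≠ 0 and c ≠ 0, and set f(x) = a*x + b and g(x) = c*x + d. If liminf_{N → ∞} (1/(2N+1)) * |{x ∈ ℤ : -N ≤ x ≤ N and gcd(f(x), g(x)) = 1}| > 0, then gcd(a, b, c, d) = 1 and a*d ≠ b*c. -/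
/-!
A set of integers with positive lower density is infinite, so it suffices to show that either
failure of the conclusion makes the set of coprime values finite. A common factor of `a, b, c, d`
divides both `f x` and `g x`, so then no value is coprime. If `a * d = b * c` the two forms are
proportional, `c * f x = a * g x`, so at a coprime value `f x ∣ a`, which bounds `|x|`.
-/

open Filter Topology

lemma tendsto_card_filter_Icc_div_of_finite_s2 (p : ℤ → Prop) [DecidablePred p]
    (hp : {x | p x}.Finite) :
    Tendsto (fun N : ℕ => (((Finset.Icc (-(N : ℤ)) N).filter p).card : ℝ) / (2 * N + 1))
      atTop (𝓝 0) := by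
  set C : ℝ := (hp.toFinset.card : ℝ)
  have hcard (N : ℕ) : (((Finset.Icc (-(N : ℤ)) N).filter p).card : ℝ) ≤ C := by
    refine Nat.cast_le.mpr (Finset.card_le_card fun x hx => ?_)
    simpa using (Finset.mem_filter.mp hx).2
  have hden : Tendsto (fun N : ℕ => 2 * (N : ℝ) + 1) atTop atTop :=
    tendsto_atTop_add_const_right _ _ (tendsto_natCast_atTop_atTop.const_mul_atTop two_pos)
  refine squeeze_zero (g := fun N : ℕ => C / (2 * N + 1)) (fun N => by positivity)
    (fun N => by gcongr; exact hcard N) (tendsto_const_nhds.div_atTop hden)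

lemma Int.gcd_gcd_gcd_dvd_gcd_add_mul (a b c d x : ℤ) :
    Int.gcd a (Int.gcd b (Int.gcd c d)) ∣ Int.gcd (a * x + b) (c * x + d) := by
  set g : ℤ := (Int.gcd a (Int.gcd b (Int.gcd c d)) : ℤ)
  have hbcd : g ∣ Int.gcd b (Int.gcd c d) := Int.gcd_dvd_right _ _
  have hcd : g ∣ Int.gcd c d := hbcd.trans (Int.gcd_dvd_right _ _)
  have ha : g ∣ a := Int.gcd_dvd_left _ _
  have hb : g ∣ b := hbcd.trans (Int.gcd_dvd_left _ _)
  have hc : g ∣ c := hcd.trans (Int.gcd_dvd_left _ _)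
  have hd : g ∣ d := hcd.trans (Int.gcd_dvd_right _ _)
  exact Int.dvd_gcd ((ha.mul_right x).add hb) ((hc.mul_right x).add hd)

lemma setOf_gcd_add_mul_eq_one_eq_empty {a b c d : ℤ}
    (h : Int.gcd a (Int.gcd b (Int.gcd c d)) ≠ 1) :
    {x : ℤ | Int.gcd (a * x + b) (c * x + d) = 1} = ∅ :=
  Set.eq_empty_of_forall_notMem fun x hx =>
    h (Nat.dvd_one.mp (hx ▸ Int.gcd_gcd_gcd_dvd_gcd_add_mul a b c d x))

lemma setOf_gcd_add_mul_eq_one_subset_Icc {a b c d : ℤ} (ha : a ≠ 0) (h : a * d = b * c) :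
    {x : ℤ | Int.gcd (a * x + b) (c * x + d) = 1} ⊆ Set.Icc (-(|a| + |b|)) (|a| + |b|) := by
  intro x hx
  have hcop : IsCoprime (a * x + b) (c * x + d) := Int.isCoprime_iff_gcd_eq_one.mpr hx
  have hdvd : a * x + b ∣ a := hcop.dvd_of_dvd_mul_right ⟨c, by linear_combination h⟩
  have hfx : |a * x + b| ≤ |a| := Int.le_of_dvd (abs_pos.mpr ha) ((abs_dvd_abs _ _).mpr hdvd)
  have hx : |x| ≤ |a| * |x| := le_mul_of_one_le_left (abs_nonneg x) (Int.one_le_abs ha)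
  have hax : |a| * |x| ≤ |b| + |a * x + b| := by
    simpa using abs_sub_le (a * x) (a * x + b) 0
  exact abs_le.mp (by linarith)

theorem stmt_2_general (a b c d : ℤ) (ha : a ≠ 0)
    (hpos : 0 < Filter.liminf (fun N : ℕ =>
        (((Finset.Icc (-(N : ℤ)) (N : ℤ)).filter
          (fun x => Int.gcd (a * x + b) (c * x + d) = 1)).card : ℝ) / (2 * N + 1))
      Filter.atTop) :
    Int.gcd a (Int.gcd b (Int.gcd c d)) = 1 ∧ a * d ≠ b * c := by
  have hinfinite : ¬{x : ℤ | Int.gcd (a * x + b) (c * x + d) = 1}.Finite := fun hfin =>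
    hpos.ne' (tendsto_card_filter_Icc_div_of_finite_s2 _ hfin).liminf_eq
  constructor
  · by_contra h
    exact hinfinite (setOf_gcd_add_mul_eq_one_eq_empty h ▸ Set.finite_empty)
  · intro h
    exact hinfinite ((Set.finite_Icc _ _).subset (setOf_gcd_add_mul_eq_one_subset_Icc ha h))

/-- Necessity: if the lower asymptotic density of `x` with
`gcd(a*x+b, c*x+d) = 1` over `[-N, N]` is positive, then `gcd(a,b,c,d) = 1`
and `a*d ≠ b*c`. -/
theorem stmt_2 (a b c d : ℤ) (ha : a ≠ 0) (hc : c ≠ 0)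
    (hpos : 0 < Filter.liminf (fun N : ℕ =>
        (((Finset.Icc (-(N : ℤ)) (N : ℤ)).filter
          (fun x => Int.gcd (a * x + b) (c * x + d) = 1)).card : ℝ) / (2 * N + 1))
      Filter.atTop) :
    Int.gcd a (Int.gcd b (Int.gcd c d)) = 1 ∧ a * d ≠ b * c :=
  stmt_2_general a b c d ha hpos
end
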